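/- arXiv:0707.0713 — 2 statements merged into one kernel-verified Lean document; each statement's English description precedes it below -/
import Mathlib

section
/- For a pure bipartite state ψ with coefficients α_{i₁i₂}, the generalized concurrence C(ψ) = (N Σ_{l₁>k₁} Σ_{l₂>k₂} |α_{k₁k₂}α_{l₁l₂} − α_{l₁k₂}α_{k₁l₂}|²)^{1/2} (for any fixed normalization constant N > 0) vanishes if and only if ψ is a product state. -/
/-!
The coefficients of `ψ` in the basis `|i₁⟩ ⊗ |i₂⟩` are those of `v ⊗ w` exactly when
`α i₁ i₂ = v i₁ * w i₂`, i.e. when the coefficient matrix has rank at most one, which over a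
field happens iff all its `2 × 2` minors vanish. Each minor is antisymmetric under swapping its
two rows or its two columns, so it suffices that the minors with `k₁ < l₁` and `k₂ < l₂` vanish,
and since `𝒩 > 0`, the concurrence vanishes exactly when they do.
-/

open TensorProduct Module

theorem sum_smul_single_tmul_single_eq_tmul_iff {R ι κ : Type*} [CommSemiring R]
    [Fintype ι] [Fintype κ] [DecidableEq ι] [DecidableEq κ]
    (α : ι → κ → R) (v : ι → R) (w : κ → R) :
    ∑ i, ∑ j, α i j • ((Pi.single i 1 : ι → R) ⊗ₜ[R] (Pi.single j 1 : κ → R)) = v ⊗ₜ w ↔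
      ∀ i j, α i j = v i * w j := by
  set b := (Pi.basisFun R ι).tensorProduct (Pi.basisFun R κ)
  have hα : ∑ i, ∑ j, α i j • ((Pi.single i 1 : ι → R) ⊗ₜ[R] (Pi.single j 1 : κ → R)) =
      b.equivFun.symm (fun p => α p.1 p.2) := by
    simp [b, Basis.equivFun_symm_apply, Fintype.sum_prod_type, Basis.tensorProduct_apply]
  rw [hα, LinearEquiv.symm_apply_eq, funext_iff, Prod.forall]
  simp [b, mul_comm]

theorem exists_eq_mul_iff_forall_mul_eq_mul {K ι κ : Type*} [Field K] (α : ι → κ → K) :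
    (∃ (v : ι → K) (w : κ → K), ∀ i j, α i j = v i * w j) ↔
      ∀ i k j l, α i j * α k l = α k j * α i l := by
  constructor
  · rintro ⟨v, w, h⟩ i k j l
    simp only [h]
    ring
  intro h
  by_cases hzero : ∀ i j, α i j = 0
  · exact ⟨0, 0, by simpa using hzero⟩
  push Not at hzero
  obtain ⟨a, b, hab⟩ := hzero
  refine ⟨fun i => α i b, fun j => α a j / α a b, fun i j => ?_⟩
  field_simp
  linear_combination h a i b j

theorem forall_mul_eq_mul_of_lt_iff {R ι κ : Type*} [CommRing R] [LinearOrder ι]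
    [LinearOrder κ] (α : ι → κ → R) :
    (∀ i k j l, i < k → j < l → α i j * α k l = α k j * α i l) ↔
      ∀ i k j l, α i j * α k l = α k j * α i l := by
  refine ⟨fun h i k j l => ?_, fun h i k j l _ _ => h i k j l⟩
  rcases lt_trichotomy i k with hik | rfl | hik <;>
    rcases lt_trichotomy j l with hjl | rfl | hjl
  · exact h i k j l hik hjl
  · ring
  · linear_combination -h i k l j hik hjl
  · ring
  · ring
  · ring
  · linear_combination -h k i j l hik hjl
  · ring
  · linear_combination h k i l j hik hjl

theorem sum_sq_norm_minors_eq_zero_iff {R ι κ : Type*} [NormedRing R] [Fintype ι] [Fintype κ]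
    [LinearOrder ι] [LinearOrder κ] (α : ι → κ → R) :
    ∑ k₁ : ι, ∑ l₁ : ι, ∑ k₂ : κ, ∑ l₂ : κ,
      (if k₁ < l₁ ∧ k₂ < l₂ then ‖α k₁ k₂ * α l₁ l₂ - α l₁ k₂ * α k₁ l₂‖ ^ 2 else 0) = 0 ↔
      ∀ k₁ l₁ k₂ l₂, k₁ < l₁ → k₂ < l₂ → α k₁ k₂ * α l₁ l₂ = α l₁ k₂ * α k₁ l₂ := by
  simp (disch := intros; positivity) only [Finset.sum_eq_zero_iff_of_nonneg]
  simp [sub_eq_zero]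

theorem stmt11 {N₁ N₂ : ℕ} (α : Fin N₁ → Fin N₂ → ℂ) (𝒩 : ℝ) (h𝒩 : 0 < 𝒩) :
    Real.sqrt (𝒩 * ∑ k₁ : Fin N₁, ∑ l₁ : Fin N₁, ∑ k₂ : Fin N₂, ∑ l₂ : Fin N₂,
      if k₁ < l₁ ∧ k₂ < l₂ then
        (‖α k₁ k₂ * α l₁ l₂ - α l₁ k₂ * α k₁ l₂‖) ^ 2 else 0) = 0 ↔
    (∃ (v : Fin N₁ → ℂ) (w : Fin N₂ → ℂ),
      (∑ i₁ : Fin N₁, ∑ i₂ : Fin N₂,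
        α i₁ i₂ • ((Pi.single i₁ 1 : Fin N₁ → ℂ) ⊗ₜ[ℂ] (Pi.single i₂ 1 : Fin N₂ → ℂ)))
        = v ⊗ₜ[ℂ] w) := by
  rw [Real.sqrt_eq_zero (by positivity), mul_eq_zero, or_iff_right h𝒩.ne',
    sum_sq_norm_minors_eq_zero_iff, forall_mul_eq_mul_of_lt_iff,
    ← exists_eq_mul_iff_forall_mul_eq_mul]
  simp_rw [sum_smul_single_tmul_single_eq_tmul_iff]
end

section
/- For a tripartite pure state ψ with coefficients α_{i₁i₂i₃}, the generalized concurrence C(ψ) = (N Σ over all pairs of multi-indices and all j ∈ {1,2,3} of |S^{k_j l_j}|²)^{1/2}, where S^{k_j l_j} = α_{k₁k₂k₃}α_{l₁l₂l₃} − α with k_j and l_j swapped in position j, vanishes if and only if ψ is a product state v₁⊗v₂⊗v₃. -/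
/-!
The concurrence vanishes exactly when every minor `S^{k_j l_j}` does. If some coefficient
`α a b c` is nonzero, the swap identities in the first two positions give
`α i j k * (α a b c)² = α i b c * α a j c * α a b k`, so `α` is an outer product of three vectors;
conversely every minor of an outer product vanishes. Outer products of vectors are exactly the
coefficient arrays of pure tensors `v₁ ⊗ v₂ ⊗ v₃` in the basis of elementary tensors.
-/

open TensorProduct

section TripleTensor

variable {R : Type*} [CommSemiring R] {ι₁ ι₂ ι₃ : Type*} [Fintype ι₁] [Fintype ι₂] [Fintype ι₃]

variable (R ι₁ ι₂ ι₃) in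
noncomputable def tripleTensorBasis :
    Module.Basis ((ι₁ × ι₂) × ι₃) R (((ι₁ → R) ⊗[R] (ι₂ → R)) ⊗[R] (ι₃ → R)) :=
  ((Pi.basisFun R ι₁).tensorProduct (Pi.basisFun R ι₂)).tensorProduct (Pi.basisFun R ι₃)

theorem tripleTensorBasis_equivFun_tmul (v₁ : ι₁ → R) (v₂ : ι₂ → R) (v₃ : ι₃ → R)
    (i : ι₁) (j : ι₂) (k : ι₃) :
    (tripleTensorBasis R ι₁ ι₂ ι₃).equivFun ((v₁ ⊗ₜ[R] v₂) ⊗ₜ[R] v₃) ((i, j), k) =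
      v₁ i * v₂ j * v₃ k := by
  simp [tripleTensorBasis, mul_comm, mul_left_comm]

variable [DecidableEq ι₁] [DecidableEq ι₂] [DecidableEq ι₃]

theorem tripleTensorBasis_apply (i : ι₁) (j : ι₂) (k : ι₃) :
    tripleTensorBasis R ι₁ ι₂ ι₃ ((i, j), k) =
      ((Pi.single i 1 : ι₁ → R) ⊗ₜ[R] (Pi.single j 1 : ι₂ → R)) ⊗ₜ[R] (Pi.single k 1 : ι₃ → R) := by
  simp [tripleTensorBasis, Module.Basis.tensorProduct_apply]

theorem sum_smul_single_tmul_eq_tmul_iff (α : ι₁ → ι₂ → ι₃ → R)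
    (v₁ : ι₁ → R) (v₂ : ι₂ → R) (v₃ : ι₃ → R) :
    ∑ i₁, ∑ i₂, ∑ i₃, α i₁ i₂ i₃ •
        (((Pi.single i₁ 1 : ι₁ → R) ⊗ₜ[R] (Pi.single i₂ 1 : ι₂ → R)) ⊗ₜ[R]
          (Pi.single i₃ 1 : ι₃ → R)) = (v₁ ⊗ₜ[R] v₂) ⊗ₜ[R] v₃ ↔
      ∀ i j k, α i j k = v₁ i * v₂ j * v₃ k := by
  let B := tripleTensorBasis R ι₁ ι₂ ι₃
  have hsum : ∑ i₁, ∑ i₂, ∑ i₃, α i₁ i₂ i₃ •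
        (((Pi.single i₁ 1 : ι₁ → R) ⊗ₜ[R] (Pi.single i₂ 1 : ι₂ → R)) ⊗ₜ[R]
          (Pi.single i₃ 1 : ι₃ → R)) = ∑ p, α p.1.1 p.1.2 p.2 • B p := by
    simp only [Fintype.sum_prod_type, B, tripleTensorBasis_apply]
  rw [hsum, ← B.equivFun_symm_apply, LinearEquiv.symm_apply_eq, funext_iff]
  simp only [Prod.forall, B, tripleTensorBasis_equivFun_tmul]

end TripleTensor

theorem exists_eq_mul_mul_of_swap_eq {K ι₁ ι₂ ι₃ : Type*} [Field K] (α : ι₁ → ι₂ → ι₃ → K)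
    (swap₁ : ∀ k₁ k₂ k₃ l₁ l₂ l₃, α k₁ k₂ k₃ * α l₁ l₂ l₃ = α l₁ k₂ k₃ * α k₁ l₂ l₃)
    (swap₂ : ∀ k₁ k₂ k₃ l₁ l₂ l₃, α k₁ k₂ k₃ * α l₁ l₂ l₃ = α k₁ l₂ k₃ * α l₁ k₂ l₃) :
    ∃ (v₁ : ι₁ → K) (v₂ : ι₂ → K) (v₃ : ι₃ → K), ∀ i j k, α i j k = v₁ i * v₂ j * v₃ k := by
  by_cases hzero : ∀ i j k, α i j k = 0
  · exact ⟨0, 0, 0, fun i j k => by simp [hzero]⟩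
  push Not at hzero
  obtain ⟨a, b, c, habc⟩ := hzero
  refine ⟨fun i => α i b c, fun j => α a j c / α a b c ^ 2, fun k => α a b k, fun i j k => ?_⟩
  have h₁ : α i j k * α a b c = α a j k * α i b c := swap₁ i j k a b c
  have h₂ : α a j k * α a b c = α a b k * α a j c := swap₂ a j k a b c
  field_simp
  linear_combination α a b c * h₁ + α i b c * h₂

theorem sq_norm_add_sq_norm_add_sq_norm_eq_zero_iff {E : Type*} [NormedAddCommGroup E]
    (x y z : E) : ‖x‖ ^ 2 + ‖y‖ ^ 2 + ‖z‖ ^ 2 = 0 ↔ x = 0 ∧ y = 0 ∧ z = 0 := by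
  rw [add_eq_zero_iff_of_nonneg (by positivity) (by positivity),
    add_eq_zero_iff_of_nonneg (by positivity) (by positivity)]
  simp only [ne_eq, OfNat.ofNat_ne_zero, not_false_eq_true, pow_eq_zero_iff, norm_eq_zero, and_assoc]

theorem stmt15 {N₁ N₂ N₃ : ℕ} (α : Fin N₁ → Fin N₂ → Fin N₃ → ℂ) (𝒩 : ℝ) (h𝒩 : 0 < 𝒩) :
    Real.sqrt (𝒩 * ∑ k₁ : Fin N₁, ∑ k₂ : Fin N₂, ∑ k₃ : Fin N₃,
      ∑ l₁ : Fin N₁, ∑ l₂ : Fin N₂, ∑ l₃ : Fin N₃,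
        ((‖α k₁ k₂ k₃ * α l₁ l₂ l₃ - α l₁ k₂ k₃ * α k₁ l₂ l₃‖) ^ 2 +
         (‖α k₁ k₂ k₃ * α l₁ l₂ l₃ - α k₁ l₂ k₃ * α l₁ k₂ l₃‖) ^ 2 +
         (‖α k₁ k₂ k₃ * α l₁ l₂ l₃ - α k₁ k₂ l₃ * α l₁ l₂ k₃‖) ^ 2)) = 0 ↔
    (∃ (v₁ : Fin N₁ → ℂ) (v₂ : Fin N₂ → ℂ) (v₃ : Fin N₃ → ℂ),
      (∑ i₁ : Fin N₁, ∑ i₂ : Fin N₂, ∑ i₃ : Fin N₃,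
        α i₁ i₂ i₃ • (((Pi.single i₁ 1 : Fin N₁ → ℂ) ⊗ₜ[ℂ] (Pi.single i₂ 1 : Fin N₂ → ℂ))
          ⊗ₜ[ℂ] (Pi.single i₃ 1 : Fin N₃ → ℂ)))
        = (v₁ ⊗ₜ[ℂ] v₂) ⊗ₜ[ℂ] v₃) := by
  rw [Real.sqrt_eq_zero (by positivity), mul_eq_zero, or_iff_right h𝒩.ne']
  simp (disch := intro _ _; positivity) only [Finset.sum_eq_zero_iff_of_nonneg, Finset.mem_univ,
    forall_const, sq_norm_add_sq_norm_add_sq_norm_eq_zero_iff, sub_eq_zero,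
    sum_smul_single_tmul_eq_tmul_iff]
  constructor
  · intro hswap
    exact exists_eq_mul_mul_of_swap_eq α (fun _ _ _ _ _ _ => (hswap _ _ _ _ _ _).1)
      (fun _ _ _ _ _ _ => (hswap _ _ _ _ _ _).2.1)
  · rintro ⟨v₁, v₂, v₃, hv⟩ k₁ k₂ k₃ l₁ l₂ l₃
    simp only [hv]
    exact ⟨by ring, by ring, by ring⟩
end
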